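/- Let Ω ⊆ ℝ² be open, g ∈ ℝ, let Ψ : Ω → ℝ be twice continuously differentiable, let ρ, β : ℝ → ℝ be continuously differentiable, and let B : ℝ → ℝ be an antiderivative of β (B′ = β). Suppose ΔΨ(x, y) = g·y·ρ′(−Ψ(x, y)) − β(Ψ(x, y)) at every point (x, y) ∈ Ω. Define P : Ω → ℝ by P(x, y) = −|∇Ψ(x, y)|²/2 − g·y·ρ(−Ψ(x, y)) − B(Ψ(x, y)). Then P is differentiable and at every point of Ω: Ψ_y Ψ_{xy} − Ψ_x Ψ_{yy} = −P_x and Ψ_x Ψ_{xy} − Ψ_y Ψ_{xx} = −P_y − g·ρ(−Ψ). -/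

import Mathlib

/-- Partial derivative in the horizontal direction `x`. -/
noncomputable def pd1 (f : ℝ × ℝ → ℝ) (p : ℝ × ℝ) : ℝ := fderiv ℝ f p (1, 0)

/-- Partial derivative in the vertical direction `y`. -/
noncomputable def pd2 (f : ℝ × ℝ → ℝ) (p : ℝ × ℝ) : ℝ := fderiv ℝ f p (0, 1)

/-- Laplacian of a function on `ℝ²`. -/
noncomputable def lap (f : ℝ × ℝ → ℝ) (p : ℝ × ℝ) : ℝ :=
  pd1 (pd1 f) p + pd2 (pd2 f) p

/-!
Differentiating `P = -|∇Ψ|²/2 - g y ρ(-Ψ) - B(Ψ)` along a direction `w` gives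
`∂_w P = -(Ψ_x ∂_w Ψ_x + Ψ_y ∂_w Ψ_y) + (g y ρ'(-Ψ) - β(Ψ)) ∂_w Ψ - g ρ(-Ψ) w₂`,
and the semilinear equation turns the middle coefficient into `ΔΨ`. For `w = (1, 0)` and
`w = (0, 1)` the two momentum equations then reduce to the symmetry `Ψ_xy = Ψ_yx`.
-/

section SecondDerivatives

variable {𝕜 E F : Type*} [RCLike 𝕜] [NormedAddCommGroup E] [NormedSpace 𝕜 E]
  [NormedAddCommGroup F] [NormedSpace 𝕜 F] {f : E → F} {p : E}

theorem ContDiffAt.differentiableAt_fderiv_apply (hf : ContDiffAt 𝕜 2 f p) (v : E) :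
    DifferentiableAt 𝕜 (fun q => fderiv 𝕜 f q v) p :=
  ((hf.fderiv_right (m := 1) le_rfl).clm_apply contDiffAt_const).differentiableAt one_ne_zero

theorem ContDiffAt.fderiv_fderiv_apply_comm (hf : ContDiffAt 𝕜 2 f p) (v w : E) :
    fderiv 𝕜 (fun q => fderiv 𝕜 f q v) p w = fderiv 𝕜 (fun q => fderiv 𝕜 f q w) p v := by
  have hdiff : DifferentiableAt 𝕜 (fderiv 𝕜 f) p :=
    (hf.fderiv_right (m := 1) le_rfl).differentiableAt one_ne_zero
  have happly (u : E) :
      fderiv 𝕜 (fun q => fderiv 𝕜 f q u) p = (fderiv 𝕜 (fderiv 𝕜 f) p).flip u := by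
    simpa using fderiv_clm_apply hdiff (differentiableAt_const u)
  simp only [happly, ContinuousLinearMap.flip_apply]
  exact hf.isSymmSndFDerivAt (by simp) w v

end SecondDerivatives

theorem pd2_pd1_eq_pd1_pd2 {f : ℝ × ℝ → ℝ} {p : ℝ × ℝ} (hf : ContDiffAt ℝ 2 f p) :
    pd2 (pd1 f) p = pd1 (pd2 f) p :=
  hf.fderiv_fderiv_apply_comm (1, 0) (0, 1)

section Pressure

variable {g : ℝ} {Ψ : ℝ × ℝ → ℝ} {ρ B : ℝ → ℝ} {b : ℝ} {p : ℝ × ℝ}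

theorem hasFDerivAt_pressure (hΨ : ContDiffAt ℝ 2 Ψ p) (hρ : DifferentiableAt ℝ ρ (-(Ψ p)))
    (hB : HasDerivAt B b (Ψ p)) :
    HasFDerivAt (fun q => -((pd1 Ψ q ^ 2 + pd2 Ψ q ^ 2) / 2) - g * q.2 * ρ (-(Ψ q)) - B (Ψ q))
      (-(pd1 Ψ p • fderiv ℝ (pd1 Ψ) p + pd2 Ψ p • fderiv ℝ (pd2 Ψ) p)
        + (g * p.2 * deriv ρ (-(Ψ p)) - b) • fderiv ℝ Ψ p
        - (g * ρ (-(Ψ p))) • ContinuousLinearMap.snd ℝ ℝ ℝ) p := by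
  have hΨ' := (hΨ.differentiableAt two_ne_zero).hasFDerivAt
  have hu : HasFDerivAt (pd1 Ψ) (fderiv ℝ (pd1 Ψ) p) p :=
    (hΨ.differentiableAt_fderiv_apply (1, 0)).hasFDerivAt
  have hv : HasFDerivAt (pd2 Ψ) (fderiv ℝ (pd2 Ψ) p) p :=
    (hΨ.differentiableAt_fderiv_apply (0, 1)).hasFDerivAt
  have hgrad := ((hu.pow 2).add (hv.pow 2)).mul_const (2⁻¹ : ℝ)
  have hbuoy := (hasFDerivAt_snd.const_mul g).mul (hρ.hasDerivAt.comp_hasFDerivAt p hΨ'.neg)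
  simp only [div_eq_mul_inv]
  refine ((hgrad.neg.sub hbuoy).sub (hB.comp_hasFDerivAt p hΨ')).congr_fderiv
    (ContinuousLinearMap.ext fun w => ?_)
  simp only [add_apply, sub_apply, neg_apply, smul_apply, ContinuousLinearMap.coe_snd',
    Function.comp_apply, Pi.neg_apply, smul_eq_mul, nsmul_eq_mul, Nat.add_one_sub_one, pow_one]
  ring

theorem pd1_pressure (hΨ : ContDiffAt ℝ 2 Ψ p) (hρ : DifferentiableAt ℝ ρ (-(Ψ p)))
    (hB : HasDerivAt B b (Ψ p)) :
    pd1 (fun q => -((pd1 Ψ q ^ 2 + pd2 Ψ q ^ 2) / 2) - g * q.2 * ρ (-(Ψ q)) - B (Ψ q)) p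
      = -(pd1 Ψ p * pd1 (pd1 Ψ) p + pd2 Ψ p * pd1 (pd2 Ψ) p)
        + (g * p.2 * deriv ρ (-(Ψ p)) - b) * pd1 Ψ p := by
  rw [pd1, (hasFDerivAt_pressure hΨ hρ hB).fderiv]
  simp [pd1]

theorem pd2_pressure (hΨ : ContDiffAt ℝ 2 Ψ p) (hρ : DifferentiableAt ℝ ρ (-(Ψ p)))
    (hB : HasDerivAt B b (Ψ p)) :
    pd2 (fun q => -((pd1 Ψ q ^ 2 + pd2 Ψ q ^ 2) / 2) - g * q.2 * ρ (-(Ψ q)) - B (Ψ q)) p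
      = -(pd1 Ψ p * pd2 (pd1 Ψ) p + pd2 Ψ p * pd2 (pd2 Ψ) p)
        + (g * p.2 * deriv ρ (-(Ψ p)) - b) * pd2 Ψ p - g * ρ (-(Ψ p)) := by
  rw [pd2, (hasFDerivAt_pressure hΨ hρ hB).fderiv]
  simp [pd2]

end Pressure

theorem stmt_9_general (Ω : Set (ℝ × ℝ)) (hΩ : IsOpen Ω) (g : ℝ)
    (Ψ : ℝ × ℝ → ℝ) (hΨ : ContDiffOn ℝ 2 Ψ Ω)
    (ρ β : ℝ → ℝ) (hρ : ContDiff ℝ 1 ρ)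
    (B : ℝ → ℝ) (hB : ∀ t : ℝ, HasDerivAt B (β t) t)
    (hsemi : ∀ p ∈ Ω, lap Ψ p = g * p.2 * deriv ρ (-(Ψ p)) - β (Ψ p))
    (P : ℝ × ℝ → ℝ)
    (hP : P = fun p => -(((pd1 Ψ p) ^ 2 + (pd2 Ψ p) ^ 2) / 2)
      - g * p.2 * ρ (-(Ψ p)) - B (Ψ p)) :
    (∀ p ∈ Ω, DifferentiableAt ℝ P p) ∧
    (∀ p ∈ Ω,
      pd2 Ψ p * pd2 (pd1 Ψ) p - pd1 Ψ p * pd2 (pd2 Ψ) p = -(pd1 P p) ∧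
      pd1 Ψ p * pd2 (pd1 Ψ) p - pd2 Ψ p * pd1 (pd1 Ψ) p
        = -(pd2 P p) - g * ρ (-(Ψ p))) := by
  subst hP
  have hΨp {p} (hp : p ∈ Ω) : ContDiffAt ℝ 2 Ψ p := hΨ.contDiffAt (hΩ.mem_nhds hp)
  have hρp (p : ℝ × ℝ) : DifferentiableAt ℝ ρ (-(Ψ p)) := hρ.differentiable one_ne_zero _
  refine ⟨fun p hp => (hasFDerivAt_pressure (hΨp hp) (hρp p) (hB (Ψ p))).differentiableAt,
    fun p hp => ?_⟩
  have hsym := pd2_pd1_eq_pd1_pd2 (hΨp hp)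
  have hlap := hsemi p hp
  rw [lap] at hlap
  rw [pd1_pressure (hΨp hp) (hρp p) (hB (Ψ p)), pd2_pressure (hΨp hp) (hρp p) (hB (Ψ p))]
  constructor
  · linear_combination -pd1 Ψ p * hlap + pd2 Ψ p * hsym
  · linear_combination -pd2 Ψ p * hlap

/-- Recovery of the pressure: if `Ψ` solves the semilinear equation
`ΔΨ = g·y·ρ′(−Ψ) − β(Ψ)` and `B′ = β`, then the pressure
`P = −|∇Ψ|²/2 − g·y·ρ(−Ψ) − B(Ψ)` is differentiable and the stream-function
form of the Euler momentum equations holds. -/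
theorem stmt_9 (Ω : Set (ℝ × ℝ)) (hΩ : IsOpen Ω) (g : ℝ)
    (Ψ : ℝ × ℝ → ℝ) (hΨ : ContDiffOn ℝ 2 Ψ Ω)
    (ρ β : ℝ → ℝ) (hρ : ContDiff ℝ 1 ρ) (hβ : ContDiff ℝ 1 β)
    (B : ℝ → ℝ) (hB : ∀ t : ℝ, HasDerivAt B (β t) t)
    (hsemi : ∀ p ∈ Ω, lap Ψ p = g * p.2 * deriv ρ (-(Ψ p)) - β (Ψ p))
    (P : ℝ × ℝ → ℝ)
    (hP : P = fun p => -(((pd1 Ψ p) ^ 2 + (pd2 Ψ p) ^ 2) / 2)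
      - g * p.2 * ρ (-(Ψ p)) - B (Ψ p)) :
    (∀ p ∈ Ω, DifferentiableAt ℝ P p) ∧
    (∀ p ∈ Ω,
      pd2 Ψ p * pd2 (pd1 Ψ) p - pd1 Ψ p * pd2 (pd2 Ψ) p = -(pd1 P p) ∧
      pd1 Ψ p * pd2 (pd1 Ψ) p - pd2 Ψ p * pd1 (pd1 Ψ) p
        = -(pd2 P p) - g * ρ (-(Ψ p))) :=
  stmt_9_general Ω hΩ g Ψ hΨ ρ β hρ B hB hsemi P hP
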